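/- The sequent A ⊢ A ⊗ I is derivable in LSkT for every formula A, while X ⊗ I ⊢ X is not derivable in LSkT for an atom X. -/

import Mathlib

/-- Formulae of left skew monoidal closed logic: atoms, unit I, ⊗, ⊸. -/
inductive Fma : Type
  | atom : ℕ → Fma
  | I : Fma
  | tens : Fma → Fma → Fma
  | lolli : Fma → Fma → Fma

/-- Trees: formulae, the empty tree, and pairing. -/
inductive Tr : Type
  | fma : Fma → Tr
  | emp : Tr
  | pair : Tr → Tr → Tr

/-- Contexts: trees with a single hole. -/
inductive Ctx : Type
  | hole : Ctx
  | pairL : Ctx → Tr → Ctx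
  | pairR : Tr → Ctx → Ctx

/-- Substitution of a tree into the hole of a context. -/
def plug : Ctx → Tr → Tr
  | Ctx.hole, U => U
  | Ctx.pairL C T, U => Tr.pair (plug C U) T
  | Ctx.pairR T C, U => Tr.pair T (plug C U)

/-- Derivability in the tree sequent calculus LSkT: `TDer T A` means `T ⊢ A`. -/
inductive TDer : Tr → Fma → Prop
  | ax {A} : TDer (Tr.fma A) A
  | IL {T C} : TDer (plug T Tr.emp) C → TDer (plug T (Tr.fma Fma.I)) C
  | IR : TDer Tr.emp Fma.I
  | tensL {T A B C} : TDer (plug T (Tr.pair (Tr.fma A) (Tr.fma B))) C →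
      TDer (plug T (Tr.fma (Fma.tens A B))) C
  | tensR {T U A B} : TDer T A → TDer U B → TDer (Tr.pair T U) (Fma.tens A B)
  | lolliL {T U A B C} : TDer U A → TDer (plug T (Tr.fma B)) C →
      TDer (plug T (Tr.pair (Tr.fma (Fma.lolli A B)) U)) C
  | lolliR {T A B} : TDer (Tr.pair T (Tr.fma A)) B → TDer T (Fma.lolli A B)
  | assoc {T U₀ U₁ U₂ C} : TDer (plug T (Tr.pair U₀ (Tr.pair U₁ U₂))) C →
      TDer (plug T (Tr.pair (Tr.pair U₀ U₁) U₂)) C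
  | unitL {T U C} : TDer (plug T U) C → TDer (plug T (Tr.pair Tr.emp U)) C
  | unitR {T U C} : TDer (plug T (Tr.pair U Tr.emp)) C → TDer (plug T U) C

/-!
`A ⊢ A ⊗ I` is `unitR` followed by `⊗R` applied to `ax` and `IR`. For the converse direction,
LSkT is sound for preorders carrying a left skew monoidal closed structure, where `unitR` only
yields `a ≤ a ⊗ I`. The three-element chain `0 < 1 < 2` with `a ⊗ b = j a`, for the closure
`j` sending `0 ↦ 0` and `1, 2 ↦ 2`, is such a structure, and there `1 ⊗ I = 2 ≰ 1`.
-/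

/-- A thin left skew monoidal closed category. -/
structure SkewClosedPreorder (α : Type*) [Preorder α] where
  tensor : α → α → α
  unit : α
  lolli : α → α → α
  tensor_le_tensor : ∀ {a a' b b'}, a ≤ a' → b ≤ b' → tensor a b ≤ tensor a' b'
  tensor_assoc_le : ∀ a b c, tensor (tensor a b) c ≤ tensor a (tensor b c)
  unit_tensor_le : ∀ a, tensor unit a ≤ a
  le_tensor_unit : ∀ a, a ≤ tensor a unit
  tensor_le_iff_le_lolli : ∀ a b c, tensor a b ≤ c ↔ a ≤ lolli b c

namespace SkewClosedPreorder

variable {α : Type*} [Preorder α] (M : SkewClosedPreorder α) (v : ℕ → α)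

lemma tensor_lolli_le {a b c : α} (h : a ≤ b) : M.tensor (M.lolli b c) a ≤ c :=
  (M.tensor_le_tensor le_rfl h).trans ((M.tensor_le_iff_le_lolli _ _ _).mpr le_rfl)

def interp : Fma → α
  | Fma.atom n => v n
  | Fma.I => M.unit
  | Fma.tens A B => M.tensor (interp A) (interp B)
  | Fma.lolli A B => M.lolli (interp A) (interp B)

def interpTree : Tr → α
  | Tr.fma A => M.interp v A
  | Tr.emp => M.unit
  | Tr.pair T U => M.tensor (interpTree T) (interpTree U)

lemma interpTree_plug_le_plug {U V : Tr} (h : M.interpTree v U ≤ M.interpTree v V) :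
    ∀ C, M.interpTree v (plug C U) ≤ M.interpTree v (plug C V)
  | Ctx.hole => h
  | Ctx.pairL C _ => M.tensor_le_tensor (interpTree_plug_le_plug h C) le_rfl
  | Ctx.pairR _ C => M.tensor_le_tensor le_rfl (interpTree_plug_le_plug h C)

theorem interpTree_le_interp_of_TDer {T : Tr} {A : Fma} (d : TDer T A) :
    M.interpTree v T ≤ M.interp v A := by
  induction d with
  | ax | IR => exact le_rfl
  | IL _ ih | tensL _ ih => exact ih.trans' (M.interpTree_plug_le_plug v (by exact le_rfl) _)
  | tensR _ _ ihT ihU => exact M.tensor_le_tensor ihT ihU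
  | lolliL _ _ ihU ihB => exact ihB.trans' (M.interpTree_plug_le_plug v (M.tensor_lolli_le ihU) _)
  | lolliR _ ih => exact (M.tensor_le_iff_le_lolli _ _ _).mp ih
  | assoc _ ih =>
    exact ih.trans' (M.interpTree_plug_le_plug v (by exact M.tensor_assoc_le _ _ _) _)
  | unitL _ ih => exact ih.trans' (M.interpTree_plug_le_plug v (by exact M.unit_tensor_le _) _)
  | unitR _ ih => exact ih.trans' (M.interpTree_plug_le_plug v (by exact M.le_tensor_unit _) _)

end SkewClosedPreorder

def collapseChain : SkewClosedPreorder (Fin 3) where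
  tensor a _ := if a = 0 then 0 else 2
  unit := 0
  lolli _ c := if c = 2 then 2 else 0
  tensor_le_tensor := by decide
  tensor_assoc_le := by decide
  unit_tensor_le := by decide
  le_tensor_unit := by decide
  tensor_le_iff_le_lolli := by decide

theorem TDer.tens_I {T : Tr} {A : Fma} (d : TDer T A) : TDer T (Fma.tens A Fma.I) :=
  TDer.unitR (T := Ctx.hole) (TDer.tensR d TDer.IR)

/-- `A ⊢ A ⊗ I` is derivable in LSkT for every `A`, but `X ⊗ I ⊢ X` is not
derivable for an atom `X`. -/
theorem rho_derivable_lam_like_underivable :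
    (∀ A : Fma, TDer (Tr.fma A) (Fma.tens A Fma.I)) ∧
    (∀ X : ℕ, ¬ TDer (Tr.fma (Fma.tens (Fma.atom X) Fma.I)) (Fma.atom X)) := by
  refine ⟨fun _ => TDer.ax.tens_I, fun X d => ?_⟩
  have sound := collapseChain.interpTree_le_interp_of_TDer (fun _ => 1) d
  exact absurd sound (show ¬ (2 : Fin 3) ≤ 1 by decide)
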